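/- For any integer b and any nonnegative integers a and d, the Zelevinsky involution of the simple multisegment {[b+k, b+d+k] : 0 ≤ k ≤ a} (a+1 segments, each of length d+1) is the simple multisegment {[b+k, b+a+k] : 0 ≤ k ≤ d} (d+1 segments, each of length a+1). -/

import Mathlib

/-- A finite multiset of integer pairs `(b, e)` is a multisegment if each pair
satisfies `b ≤ e`; the pair `(b, e)` encodes the segment `{b, b+1, …, e}`. -/
def IsMultisegment (α : Multiset (ℤ × ℤ)) : Prop := ∀ p ∈ α, p.1 ≤ p.2

/-- The length `e - b + 1` of the segment `(b, e)`. -/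
def segLen (p : ℤ × ℤ) : ℕ := (p.2 - p.1 + 1).toNat

/-- `L_α`: the maximal length of a segment of `α`. -/
def maxLen (α : Multiset (ℤ × ℤ)) : ℕ := (α.map segLen).sup

/-- The union of the segments `p` and `q` is a segment strictly containing both. -/
def Linked (p q : ℤ × ℤ) : Prop :=
  q.1 ≤ p.2 + 1 ∧ p.1 ≤ q.2 + 1 ∧
    (min p.1 q.1, max p.2 q.2) ≠ p ∧ (min p.1 q.1, max p.2 q.2) ≠ q

/-- The intersection of two segments, as a multiset (empty if the segments are disjoint). -/
def interMS (p q : ℤ × ℤ) : Multiset (ℤ × ℤ) :=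
  if max p.1 q.1 ≤ min p.2 q.2 then {(max p.1 q.1, min p.2 q.2)} else 0

/-- An elementary operation replaces two segments whose union is a segment strictly
containing both by their union and (if nonempty) their intersection. -/
def ElemStep (α β : Multiset (ℤ × ℤ)) : Prop :=
  ∃ p q rest, α = p ::ₘ q ::ₘ rest ∧ Linked p q ∧
    β = (min p.1 q.1, max p.2 q.2) ::ₘ (interMS p q + rest)

/-- The partial order on multisegments: `α ≤ β` iff `β` is obtained from `α` by
a finite (possibly empty) sequence of elementary operations. -/
def msLE (α β : Multiset (ℤ × ℤ)) : Prop := Relation.ReflTransGen ElemStep α β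

/-- Mœglin–Waldspurger: the chain `Δ_e, Δ_{e-1}, …, Δ_m` starting from `Δ`,
where at each step we pass to a segment of `α` with end value one less, preceding
the current segment, and with maximal base value (fuel-driven recursion). -/
def mwChainAux : ℕ → Multiset (ℤ × ℤ) → ℤ × ℤ → List (ℤ × ℤ)
  | 0, _, Δ => [Δ]
  | n + 1, α, Δ =>
    let s := ((α.filter (fun p => p.2 = Δ.2 - 1 ∧ p.1 < Δ.1)).map Prod.fst).toFinset
    if h : s.Nonempty then Δ :: mwChainAux n α (s.max' h, Δ.2 - 1) else [Δ]

/-- The Mœglin–Waldspurger chain `Δ_e, Δ_{e-1}, …, Δ_m` of `α`: here `e` is the largest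
end value of a segment of `α` and `Δ_e` has maximal base value among segments with
end value `e`. -/
def mwChain (α : Multiset (ℤ × ℤ)) : List (ℤ × ℤ) :=
  let ends := (α.map Prod.snd).toFinset
  if h : ends.Nonempty then
    let e := ends.max' h
    let bases := ((α.filter (fun p => p.2 = e)).map Prod.fst).toFinset
    if hb : bases.Nonempty then mwChainAux α.card α (bases.max' hb, e) else []
  else []

/-- `M(α) = [m, e]`. -/
def mwSegment (α : Multiset (ℤ × ℤ)) : ℤ × ℤ :=
  (((mwChain α).getLastD (0, 0)).2, ((mwChain α).headD (0, 0)).2)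

/-- Delete the end value from a segment, discarding the segment if it becomes empty. -/
def mwShrink (p : ℤ × ℤ) : Multiset (ℤ × ℤ) :=
  if p.1 ≤ p.2 - 1 then {(p.1, p.2 - 1)} else 0

/-- `α ∖ M(α)`: delete the integer `i` from the segment `Δ_i` for each `m ≤ i ≤ e`. -/
def mwResidual (α : Multiset (ℤ × ℤ)) : Multiset (ℤ × ℤ) :=
  (α - ↑(mwChain α)) + (↑(mwChain α) : Multiset (ℤ × ℤ)).bind mwShrink

/-- The total number of integers occurring in the segments of `α` (with multiplicity). -/
def msSize (α : Multiset (ℤ × ℤ)) : ℕ := (α.map segLen).sum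

def tildeAux : ℕ → Multiset (ℤ × ℤ) → Multiset (ℤ × ℤ)
  | 0, _ => 0
  | n + 1, α => if α = 0 then 0 else mwSegment α ::ₘ tildeAux n (mwResidual α)

/-- The Zelevinsky involution `α ↦ α~`, computed by the Mœglin–Waldspurger algorithm:
`∅~ = ∅` and `α~ = {M(α)} ⊎ (α ∖ M(α))~`. -/
def tilde (α : Multiset (ℤ × ℤ)) : Multiset (ℤ × ℤ) := tildeAux (msSize α) α

/-- The simple multisegment `{[b, e], [b+1, e+1], …, [b+n-1, e+n-1]}`. -/
def simpleMS (b e : ℤ) (n : ℕ) : Multiset (ℤ × ℤ) :=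
  (Multiset.range n).map fun k => (b + (k : ℤ), e + (k : ℤ))

/-- A multisegment is simple if it has the form `{[b,e], [b+1,e+1], …, [b+n-1, e+n-1]}`
with `b ≤ e` and `n ≥ 1`. -/
def IsSimple (α : Multiset (ℤ × ℤ)) : Prop :=
  ∃ (b e : ℤ) (n : ℕ), b ≤ e ∧ 1 ≤ n ∧ α = simpleMS b e n

/-- The union `⋃_{Δ ∈ α} Δ` of the segments of `α`, as a set of integers. -/
def unionSet (α : Multiset (ℤ × ℤ)) : Set ℤ := {x | ∃ p ∈ α, p.1 ≤ x ∧ x ≤ p.2}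

/-- `c_α`: the minimal number of segments whose union is `⋃_{Δ ∈ α} Δ`. -/
noncomputable def cNum (α : Multiset (ℤ × ℤ)) : ℕ :=
  sInf {n | ∃ β : Multiset (ℤ × ℤ), IsMultisegment β ∧ β.card = n ∧ unionSet β = unionSet α}

/-!
For a simple multisegment `{[b+k, e+k] : 0 ≤ k ≤ n}` the Mœglin–Waldspurger chain runs
through every segment, from `[b+n, e+n]` down to `[b, e]`, so `M(α) = [e, e+n]` and
`α ∖ M(α)` is the simple multisegment `{[b+k, e-1+k]}` (empty once `b = e`). Induction on
`e - b` thus produces the segments `[b+d, b+d+n], …, [b, b+n]`, a simple multisegment again.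
-/

def mwPredBases (α : Multiset (ℤ × ℤ)) (Δ : ℤ × ℤ) : Finset ℤ :=
  ((α.filter fun p => p.2 = Δ.2 - 1 ∧ p.1 < Δ.1).map Prod.fst).toFinset

theorem mem_mwPredBases {α : Multiset (ℤ × ℤ)} {Δ : ℤ × ℤ} {x : ℤ} :
    x ∈ mwPredBases α Δ ↔ (x, Δ.2 - 1) ∈ α ∧ x < Δ.1 := by
  simp only [mwPredBases, Multiset.mem_toFinset, Multiset.mem_map, Multiset.mem_filter]
  constructor
  · rintro ⟨p, ⟨hp, hend, hbase⟩, rfl⟩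
    exact ⟨hend ▸ hp, hbase⟩
  · rintro ⟨hx, hbase⟩
    exact ⟨_, ⟨hx, rfl, hbase⟩, rfl⟩

theorem mwChainAux_succ (n : ℕ) (α : Multiset (ℤ × ℤ)) (Δ : ℤ × ℤ) :
    mwChainAux (n + 1) α Δ =
      if h : (mwPredBases α Δ).Nonempty then
        Δ :: mwChainAux n α ((mwPredBases α Δ).max' h, Δ.2 - 1)
      else [Δ] :=
  rfl

theorem tildeAux_zero_right (fuel : ℕ) : tildeAux fuel 0 = 0 := by
  cases fuel <;> rfl

section SimpleMS

variable {b e : ℤ} {n : ℕ}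

theorem simpleMS_eq_map_range (b e : ℤ) (n : ℕ) :
    simpleMS b e n = (Multiset.range n).map fun k : ℕ => (b + k, e + k) := by
  simp [simpleMS, Multiset.map_map]

theorem simpleMS_succ (b e : ℤ) (n : ℕ) :
    simpleMS b e (n + 1) = (b + n, e + n) ::ₘ simpleMS b e n := by
  simp only [simpleMS_eq_map_range, Multiset.range_succ, Multiset.map_cons]

theorem simpleMS_succ_ne_zero (b e : ℤ) (n : ℕ) : simpleMS b e (n + 1) ≠ 0 := by
  rw [simpleMS_succ]
  exact Multiset.cons_ne_zero

theorem mem_simpleMS {p : ℤ × ℤ} :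
    p ∈ simpleMS b e n ↔ ∃ k < n, (b + k, e + k) = p := by
  simp [simpleMS_eq_map_range]

theorem card_simpleMS : (simpleMS b e n).card = n := by
  simp [simpleMS_eq_map_range]

theorem msSize_simpleMS : msSize (simpleMS b e n) = n * segLen (b, e) := by
  simp [msSize, simpleMS_eq_map_range, Multiset.map_map, Function.comp_def, segLen]

theorem mwPredBases_simpleMS_first : mwPredBases (simpleMS b e n) (b, e) = ∅ := by
  ext x
  simp only [mem_mwPredBases, mem_simpleMS, Prod.mk.injEq, Finset.notMem_empty, iff_false]
  omega

theorem mwPredBases_simpleMS_succ {k : ℕ} (hk : k < n) :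
    mwPredBases (simpleMS b e n) (b + (k + 1 : ℕ), e + (k + 1 : ℕ)) = {b + k} := by
  ext x
  simp only [mem_mwPredBases, mem_simpleMS, Prod.mk.injEq, Finset.mem_singleton]
  constructor
  · rintro ⟨⟨j, -, hb, he⟩, -⟩
    omega
  · rintro rfl
    exact ⟨⟨k, hk, rfl, by push_cast; ring⟩, by push_cast; omega⟩

def simpleChain (b e : ℤ) (k : ℕ) : List (ℤ × ℤ) :=
  (List.range (k + 1)).reverse.map fun j : ℕ => (b + j, e + j)

theorem simpleChain_zero : simpleChain b e 0 = [(b, e)] := by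
  simp [simpleChain]

theorem simpleChain_succ (k : ℕ) :
    simpleChain b e (k + 1) = (b + (k + 1 : ℕ), e + (k + 1 : ℕ)) :: simpleChain b e k := by
  rw [simpleChain, List.range_succ, List.reverse_append, List.map_append]
  rfl

theorem coe_simpleChain (k : ℕ) :
    (simpleChain b e k : Multiset (ℤ × ℤ)) = simpleMS b e (k + 1) := by
  rw [simpleMS_eq_map_range, simpleChain, ← Multiset.map_coe, Multiset.coe_reverse,
    Multiset.coe_range]

theorem mwChainAux_simpleMS {k fuel : ℕ} (hk : k < n) (hfuel : k ≤ fuel) :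
    mwChainAux fuel (simpleMS b e n) (b + k, e + k) = simpleChain b e k := by
  induction k generalizing fuel with
  | zero =>
    cases fuel with
    | zero => simp [mwChainAux, simpleChain_zero]
    | succ fuel => simp [mwChainAux_succ, mwPredBases_simpleMS_first, simpleChain_zero]
  | succ k ih =>
    obtain ⟨fuel, rfl⟩ : ∃ m, fuel = m + 1 := ⟨fuel - 1, by omega⟩
    rw [mwChainAux_succ, mwPredBases_simpleMS_succ (by omega),
      dif_pos (Finset.singleton_nonempty _), Finset.max'_singleton, simpleChain_succ]
    have hend : e + ((k + 1 : ℕ) : ℤ) - 1 = e + k := by push_cast; ring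
    rw [hend, ih (by omega) (by omega)]

theorem mwChain_simpleMS : mwChain (simpleMS b e (n + 1)) = simpleChain b e n := by
  have hlast : (b + n, e + n) ∈ simpleMS b e (n + 1) := mem_simpleMS.2 ⟨n, by omega, rfl⟩
  have hends : ((simpleMS b e (n + 1)).map Prod.snd).toFinset.Nonempty :=
    ⟨e + n, Multiset.mem_toFinset.2 (Multiset.mem_map_of_mem _ hlast)⟩
  have hmax : ((simpleMS b e (n + 1)).map Prod.snd).toFinset.max' hends = e + n := by
    rw [Finset.max'_eq_iff]
    refine ⟨Multiset.mem_toFinset.2 (Multiset.mem_map_of_mem _ hlast), ?_⟩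
    simp only [Multiset.mem_toFinset, Multiset.mem_map, mem_simpleMS]
    rintro _ ⟨_, ⟨k, hk, rfl⟩, rfl⟩
    simp only
    omega
  have hbases : (((simpleMS b e (n + 1)).filter fun p => p.2 = e + n).map Prod.fst).toFinset
      = {b + n} := by
    ext x
    simp only [Multiset.mem_toFinset, Multiset.mem_map, Multiset.mem_filter, mem_simpleMS,
      Finset.mem_singleton]
    constructor
    · rintro ⟨_, ⟨⟨k, -, rfl⟩, hk⟩, rfl⟩
      simp only at hk ⊢
      omega
    · rintro rfl
      exact ⟨_, ⟨⟨n, by omega, rfl⟩, rfl⟩, rfl⟩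
  simp only [mwChain, dif_pos hends, hmax, hbases, dif_pos (Finset.singleton_nonempty _),
    Finset.max'_singleton, card_simpleMS]
  exact mwChainAux_simpleMS (by omega) (by omega)

theorem mwSegment_simpleMS : mwSegment (simpleMS b e (n + 1)) = (e, e + n) := by
  simp [mwSegment, mwChain_simpleMS, simpleChain, List.head?_range, List.getLast?_range]

theorem mwResidual_simpleMS :
    mwResidual (simpleMS b e (n + 1)) = (simpleMS b e (n + 1)).bind mwShrink := by
  rw [mwResidual, mwChain_simpleMS, coe_simpleChain, tsub_self, zero_add]

theorem bind_mwShrink_simpleMS (b e : ℤ) (n : ℕ) :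
    (simpleMS b e n).bind mwShrink = if b < e then simpleMS b (e - 1) n else 0 := by
  rw [simpleMS_eq_map_range, Multiset.bind_map]
  split_ifs with h
  · rw [simpleMS_eq_map_range, ← Multiset.bind_singleton]
    refine Multiset.bind_congr fun k _ => ?_
    rw [mwShrink, if_pos (by omega)]
    congr 2
    ring
  · rw [← Multiset.bind_zero (Multiset.range n)]
    exact Multiset.bind_congr fun k _ => if_neg (by omega)

theorem tildeAux_succ_simpleMS (fuel : ℕ) (b e : ℤ) (n : ℕ) :
    tildeAux (fuel + 1) (simpleMS b e (n + 1)) =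
      (e, e + n) ::ₘ tildeAux fuel (if b < e then simpleMS b (e - 1) (n + 1) else 0) := by
  rw [tildeAux, if_neg (simpleMS_succ_ne_zero _ _ _), mwSegment_simpleMS, mwResidual_simpleMS,
    bind_mwShrink_simpleMS]

theorem tildeAux_simpleMS (b : ℤ) (n d : ℕ) {fuel : ℕ} (hfuel : d < fuel) :
    tildeAux fuel (simpleMS b (b + d) (n + 1)) = simpleMS b (b + n) (d + 1) := by
  obtain ⟨fuel, rfl⟩ : ∃ m, fuel = m + 1 := ⟨fuel - 1, by omega⟩
  induction d generalizing fuel with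
  | zero =>
    rw [tildeAux_succ_simpleMS, if_neg (by omega), tildeAux_zero_right]
    simp [simpleMS_eq_map_range]
  | succ d ih =>
    obtain ⟨fuel, rfl⟩ : ∃ m, fuel = m + 1 := ⟨fuel - 1, by omega⟩
    have hend : b + ((d + 1 : ℕ) : ℤ) - 1 = b + d := by push_cast; ring
    rw [tildeAux_succ_simpleMS, if_pos (by omega), hend, ih fuel (by omega),
      simpleMS_succ b (b + n) (d + 1)]
    congr 2
    push_cast
    ring

end SimpleMS

/-- The Zelevinsky involution of the simple multisegment
`{[b+k, b+d+k] : 0 ≤ k ≤ a}` is the simple multisegment `{[b+k, b+a+k] : 0 ≤ k ≤ d}`. -/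
theorem tilde_simpleMS_sym (b : ℤ) (a d : ℕ) :
    tilde (simpleMS b (b + (d : ℤ)) (a + 1)) = simpleMS b (b + (a : ℤ)) (d + 1) := by
  have hlen : segLen (b, b + d) = d + 1 := by simp [segLen]
  rw [tilde, msSize_simpleMS, hlen]
  exact tildeAux_simpleMS b a d (by nlinarith)
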